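/- arXiv:2504.14838 — 3 statements merged into one kernel-verified Lean document; each statement's English description precedes it below -/
import Mathlib

section
/- Let (Ω, μ) be a probability space, Y : Ω → ℝ measurable with atomless law (continuous CDF F), and J : Ω → ℝ bounded and measurable. Let η ∈ (0,1) be a continuity point of the upper quantile function Θ(η) = inf{x ∈ ℝ : F(x) ≥ 1 − η}, and assume F is continuous at Θ(η). For n with ⌊ηn⌋ ≥ 1 and i.i.d. samples ω_1,…,ω_n ∼ μ, let T_n = (1/⌊ηn⌋) Σ_{j=1}^{⌊ηn⌋} J(ω_{(j)}), where ω_{(j)} is the sample with the j-th largest Y-value (almost surely unique). Then lim_{n→∞} E[T_n] = E[J | Y ≥ Θ(η)]. -/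
open MeasureTheory Filter Set

/-- The average of `J` over the `k` samples (among `x 0, …, x (n-1)`) with the largest
`Y`-values: a sample is selected iff fewer than `k` samples have a strictly larger `Y`-value.
When the `Y`-values are pairwise distinct (which holds almost surely for an atomless law) and
`1 ≤ k ≤ n`, exactly `k` samples are selected. -/
noncomputable def topQuantileAvg {Ω : Type*} (Y J : Ω → ℝ) (k : ℕ) {n : ℕ}
    (x : Fin n → Ω) : ℝ :=
  (k : ℝ)⁻¹ * ∑ i, if (Finset.univ.filter fun l => Y (x i) < Y (x l)).card < k
    then J (x i) else 0

/-! By symmetry between the samples, `E[T_n] = (n / k) ∫ J(ω) Q(Y ω) dμ(ω)` with `k = ⌊ηn⌋`,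
where `Q(c)` is the probability that fewer than `k` of `n - 1` further samples have a `Y`-value
above `c`: a sample is among the top `k` exactly when fewer than `k` others beat it. That count is
binomial with mean `(n - 1) P(Y > c)` and variance at most `n / 4`, so by Chebyshev `Q(c) → 1`
when `P(Y > c) < η` and `Q(c) → 0` when `P(Y > c) > η`. Since the law of `Y` is atomless, its CDF
`F` is continuous, the level set `{F = 1 - η}` is a `Y`-null interval, off which `P(Y > c) < η`
iff `c ≥ Θ(η)`, and `P(Y ≥ Θ(η)) = 1 - F(Θ(η)) = η`. Dominated convergence and `n / k → 1 / η`
finish the proof. -/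

open ProbabilityTheory Topology

namespace ProbabilityTheory

lemma integral_cond {Ω : Type*} [MeasurableSpace Ω] (μ : Measure Ω) (s : Set Ω) (f : Ω → ℝ) :
    ∫ a, f a ∂(cond μ s) = (μ.real s)⁻¹ * ∫ a in s, f a ∂μ := by
  rw [cond, integral_smul_measure, ENNReal.toReal_inv, smul_eq_mul, measureReal_def]

variable (ν : Measure ℝ)

lemma exists_cdf_lt {r : ℝ} (hr : 0 < r) : ∃ x, cdf ν x < r :=
  ((tendsto_cdf_atBot ν).eventually (eventually_lt_nhds hr)).exists

lemma exists_lt_cdf {r : ℝ} (hr : r < 1) : ∃ x, r < cdf ν x :=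
  ((tendsto_cdf_atTop ν).eventually (eventually_gt_nhds hr)).exists

variable [IsProbabilityMeasure ν] [NullSingletonClass ν]

lemma continuous_cdf : Continuous (cdf ν) := by
  refine continuous_iff_continuousAt.2 fun x => ?_
  rw [(monotone_cdf ν).continuousAt_iff_leftLim_eq_rightLim, StieltjesFunction.rightLim_eq]
  have hatom : ENNReal.ofReal (cdf ν x - Function.leftLim (cdf ν) x) = 0 := by
    rw [← StieltjesFunction.measure_singleton, measure_cdf, measure_singleton]
  have := (monotone_cdf ν).leftLim_le (le_refl x)
  rw [ENNReal.ofReal_eq_zero] at hatom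
  linarith

lemma measure_setOf_cdf_eq {r : ℝ} (hr0 : 0 < r) (hr1 : r < 1) : ν {x | cdf ν x = r} = 0 := by
  set I := {x | cdf ν x = r}
  rcases I.eq_empty_or_nonempty with hI | hI
  · rw [hI, measure_empty]
  have hclosed : IsClosed I := isClosed_eq (continuous_cdf ν) continuous_const
  obtain ⟨x₀, hx₀⟩ := exists_cdf_lt ν hr0
  obtain ⟨x₁, hx₁⟩ := exists_lt_cdf ν hr1
  have hbdd_below : BddBelow I := ⟨x₀, fun y (hy : cdf ν y = r) =>
    le_of_lt ((monotone_cdf ν).reflect_lt (hx₀.trans_eq hy.symm))⟩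
  have hbdd_above : BddAbove I := ⟨x₁, fun y (hy : cdf ν y = r) =>
    le_of_lt ((monotone_cdf ν).reflect_lt (hy.trans_lt hx₁))⟩
  have ha : cdf ν (sInf I) = r := hclosed.csInf_mem hI hbdd_below
  have hb : cdf ν (sSup I) = r := hclosed.csSup_mem hI hbdd_above
  have hsub : I ⊆ Icc (sInf I) (sSup I) := fun x hx =>
    ⟨csInf_le hbdd_below hx, le_csSup hbdd_above hx⟩
  refine measure_mono_null hsub ?_
  rw [← measure_congr Ioc_ae_eq_Icc, ← measure_cdf ν, StieltjesFunction.measure_Ioc, ha, hb,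
    sub_self, ENNReal.ofReal_zero]

end ProbabilityTheory

namespace TopQuantile

section Superlevel

variable {F : ℝ → ℝ} {r : ℝ}

lemma sInf_setOf_le_le_iff (hF : Continuous F) (hFm : Monotone F) (hlo : ∃ x, F x < r)
    (hhi : ∃ x, r ≤ F x) (x : ℝ) : sInf {y | r ≤ F y} ≤ x ↔ r ≤ F x := by
  obtain ⟨x₀, hx₀⟩ := hlo
  have hbdd : BddBelow {y | r ≤ F y} :=
    ⟨x₀, fun y (hy : r ≤ F y) => le_of_lt (hFm.reflect_lt (hx₀.trans_le hy))⟩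
  have hmem : r ≤ F (sInf {y | r ≤ F y}) :=
    (isClosed_le continuous_const hF).csInf_mem hhi hbdd
  exact ⟨fun h => hmem.trans (hFm h), fun h => csInf_le hbdd h⟩

lemma apply_sInf_setOf_le (hF : Continuous F) (hFm : Monotone F) (hlo : ∃ x, F x < r)
    (hhi : ∃ x, r ≤ F x) : F (sInf {y | r ≤ F y}) = r := by
  set T := sInf {y | r ≤ F y}
  have hiff := sInf_setOf_le_le_iff hF hFm hlo hhi
  refine le_antisymm ?_ ((hiff T).1 le_rfl)
  refine le_of_tendsto (hF.continuousAt.tendsto.mono_left nhdsWithin_le_nhds)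
    (eventually_nhdsWithin_of_forall (s := Iio T) fun y hy => ?_)
  exact le_of_lt (not_le.1 fun h => (not_le.2 hy) ((hiff y).2 h))

end Superlevel

noncomputable def upperQuantile (ν : Measure ℝ) (η : ℝ) : ℝ :=
  sInf {x | 1 - η ≤ cdf ν x}

section UpperQuantile

variable {ν : Measure ℝ} [IsProbabilityMeasure ν] [NullSingletonClass ν] {η : ℝ}

lemma upperQuantile_le_iff (hη : η ∈ Ioo 0 1) (x : ℝ) :
    upperQuantile ν η ≤ x ↔ 1 - η ≤ cdf ν x :=
  sInf_setOf_le_le_iff (continuous_cdf ν) (monotone_cdf ν) (exists_cdf_lt ν (by linarith [hη.2]))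
    ((exists_lt_cdf ν (by linarith [hη.1])).imp fun _ => le_of_lt) x

lemma cdf_upperQuantile (hη : η ∈ Ioo 0 1) : cdf ν (upperQuantile ν η) = 1 - η :=
  apply_sInf_setOf_le (continuous_cdf ν) (monotone_cdf ν) (exists_cdf_lt ν (by linarith [hη.2]))
    ((exists_lt_cdf ν (by linarith [hη.1])).imp fun _ => le_of_lt)

end UpperQuantile

lemma integrable_ite_of_abs_le {α : Type*} [MeasurableSpace α] {ν : Measure α}
    [IsFiniteMeasure ν] {p : α → Prop} [DecidablePred p] (hp : MeasurableSet {a | p a})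
    {f : α → ℝ} (hf : Measurable f) {C : ℝ} (hC : ∀ a, |f a| ≤ C) :
    Integrable (fun a => if p a then f a else 0) ν := by
  refine Integrable.of_bound (hf.ite hp measurable_const).aestronglyMeasurable C
    (ae_of_all _ fun a => ?_)
  split_ifs
  · exact hC a
  · simpa using (abs_nonneg _).trans (hC a)

lemma tendsto_integral_mul_of_ae_tendsto_indicator {α ι : Type*} [MeasurableSpace α]
    {μ : Measure α} [IsFiniteMeasure μ] {l : Filter ι} [l.IsCountablyGenerated] {J : α → ℝ}
    (hJ : Measurable J) {C : ℝ} (hC : ∀ a, |J a| ≤ C) {g : ι → α → ℝ}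
    (hg : ∀ i, Measurable (g i)) (hg01 : ∀ i a, g i a ∈ Icc (0 : ℝ) 1) {s : Set α}
    (hs : MeasurableSet s) (hlim : ∀ᵐ a ∂μ, Tendsto (fun i => g i a) l (𝓝 (s.indicator 1 a))) :
    Tendsto (fun i => ∫ a, J a * g i a ∂μ) l (𝓝 (∫ a in s, J a ∂μ)) := by
  rw [← integral_indicator hs]
  refine tendsto_integral_filter_of_dominated_convergence (fun _ => C)
    (Eventually.of_forall fun i => (hJ.mul (hg i)).aestronglyMeasurable)
    (Eventually.of_forall fun i => ae_of_all _ fun a => ?_) (integrable_const C) ?_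
  · rw [Real.norm_eq_abs, abs_mul, abs_of_nonneg (hg01 i a).1]
    exact (mul_le_of_le_one_right (abs_nonneg _) (hg01 i a).2).trans (hC a)
  · filter_upwards [hlim] with a ha
    have hJind : J a * s.indicator 1 a = s.indicator J a := by
      by_cases has : a ∈ s <;> simp [has]
    simpa only [hJind] using ha.const_mul (J a)

lemma tendsto_natFloor_mul_succ_div_succ {η : ℝ} (hη : 0 ≤ η) :
    Tendsto (fun m : ℕ => (⌊η * ((m + 1 : ℕ) : ℝ)⌋₊ : ℝ) / ((m + 1 : ℕ) : ℝ)) atTop (𝓝 η) :=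
  (tendsto_nat_floor_mul_div_atTop hη).comp
    (tendsto_natCast_atTop_atTop.comp (tendsto_add_atTop_nat 1))

lemma tendsto_natFloor_mul_succ_div {η : ℝ} (hη : 0 ≤ η) :
    Tendsto (fun m : ℕ => (⌊η * ((m + 1 : ℕ) : ℝ)⌋₊ : ℝ) / m) atTop (𝓝 η) := by
  have hratio : Tendsto (fun m : ℕ => ((m : ℝ) / (m + 1))⁻¹) atTop (𝓝 1) := by
    simpa using (tendsto_natCast_div_add_atTop (1 : ℝ)).inv₀ one_ne_zero
  rw [← mul_one η]
  refine ((tendsto_natFloor_mul_succ_div_succ hη).mul hratio).congr' ?_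
  filter_upwards [eventually_gt_atTop 0] with m hm
  have : (m : ℝ) ≠ 0 := Nat.cast_ne_zero.2 hm.ne'
  push_cast
  field_simp

section Sampling

variable {Ω : Type*}

noncomputable def exceedCount (Y : Ω → ℝ) (c : ℝ) {m : ℕ} (z : Fin m → Ω) : ℕ :=
  (Finset.univ.filter fun j => c < Y (z j)).card

noncomputable def fewExceedProb [MeasurableSpace Ω] (μ : Measure Ω) (Y : Ω → ℝ) (m k : ℕ)
    (c : ℝ) : ℝ :=
  (Measure.pi fun _ : Fin m => μ).real {z | exceedCount Y c z < k}

variable {Y : Ω → ℝ} {m : ℕ}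

lemma topQuantileAvg_eq (J : Ω → ℝ) (k : ℕ) (x : Fin m → Ω) :
    topQuantileAvg Y J k x
      = (k : ℝ)⁻¹ * ∑ i, if exceedCount Y (Y (x i)) x < k then J (x i) else 0 :=
  rfl

lemma exceedCount_eq_sum_indicator (c : ℝ) (z : Fin m → Ω) :
    (exceedCount Y c z : ℝ) = ∑ j, {ω | c < Y ω}.indicator (fun _ => (1 : ℝ)) (z j) := by
  simp only [exceedCount, Finset.card_filter, Nat.cast_sum, Nat.cast_ite, Nat.cast_one,
    Nat.cast_zero, Set.indicator_apply, Set.mem_ofPred_eq]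

lemma exceedCount_succAbove (x : Fin (m + 1) → Ω) (i : Fin (m + 1)) :
    exceedCount Y (Y (x i)) x = exceedCount Y (Y (x i)) fun j => x (i.succAbove j) := by
  simp only [exceedCount, Finset.card_filter, Fin.sum_univ_succAbove _ i, lt_irrefl, if_false,
    zero_add]

variable [MeasurableSpace Ω]

lemma measurable_exceedCount {α : Type*} [MeasurableSpace α] (hY : Measurable Y)
    {c : α → ℝ} (hc : Measurable c) {z : α → Fin m → Ω} (hz : Measurable z) :
    Measurable fun a => exceedCount Y (c a) (z a) := by
  simp only [exceedCount, Finset.card_filter]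
  exact Finset.measurable_sum _ fun j _ => Measurable.ite
    (measurableSet_lt hc (hY.comp ((measurable_pi_apply j).comp hz)))
    measurable_const measurable_const

lemma integral_pi_succAbove (μ : Measure Ω) [SigmaFinite μ] {f : Ω → (Fin m → Ω) → ℝ}
    (hf : Integrable (Function.uncurry f) (μ.prod (Measure.pi fun _ => μ))) (i : Fin (m + 1)) :
    ∫ x, f (x i) (fun j => x (i.succAbove j)) ∂(Measure.pi fun _ => μ)
      = ∫ a, ∫ z, f a z ∂(Measure.pi fun _ => μ) ∂μ :=
  ((measurePreserving_piFinSuccAbove (fun _ => μ) i).integral_comp'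
    (Function.uncurry f)).trans (integral_prod _ hf)

variable (μ : Measure Ω) [IsProbabilityMeasure μ] {J : Ω → ℝ}

lemma integral_topQuantileAvg (hY : Measurable Y) (hJ : Measurable J) {C : ℝ}
    (hC : ∀ ω, |J ω| ≤ C) (m k : ℕ) :
    ∫ x, topQuantileAvg Y J k x ∂(Measure.pi fun _ : Fin (m + 1) => μ)
      = (k : ℝ)⁻¹ * (m + 1) * ∫ a, J a * fewExceedProb μ Y m k (Y a) ∂μ := by
  set g : Ω → (Fin m → Ω) → ℝ := fun a z => if exceedCount Y (Y a) z < k then J a else 0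
  have hg_int : Integrable (Function.uncurry g) (μ.prod (Measure.pi fun _ => μ)) :=
    integrable_ite_of_abs_le (measurableSet_lt (measurable_exceedCount hY
      (hY.comp measurable_fst) measurable_snd) measurable_const) (hJ.comp measurable_fst)
      fun p => hC p.1
  have hg_inner (a : Ω) :
      ∫ z, g a z ∂(Measure.pi fun _ => μ) = J a * fewExceedProb μ Y m k (Y a) := by
    have hmeas : MeasurableSet {z : Fin m → Ω | exceedCount Y (Y a) z < k} :=
      measurableSet_lt (measurable_exceedCount hY measurable_const measurable_id) measurable_const
    rw [mul_comm, fewExceedProb, ← smul_eq_mul, ← integral_indicator_const (J a) hmeas]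
    simp only [g, Set.indicator_apply, Set.mem_ofPred_eq]
  have hsummand (i : Fin (m + 1)) : ∫ x, (if exceedCount Y (Y (x i)) x < k then J (x i) else 0)
      ∂(Measure.pi fun _ => μ) = ∫ a, J a * fewExceedProb μ Y m k (Y a) ∂μ := by
    simp_rw [exceedCount_succAbove _ i]
    rw [integral_pi_succAbove μ hg_int i]
    exact integral_congr_ae (ae_of_all _ hg_inner)
  have hsummand_int (i : Fin (m + 1)) : Integrable (fun x : Fin (m + 1) → Ω =>
      if exceedCount Y (Y (x i)) x < k then J (x i) else 0) (Measure.pi fun _ => μ) :=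
    integrable_ite_of_abs_le (measurableSet_lt (measurable_exceedCount hY
      (hY.comp (measurable_pi_apply i)) measurable_id) measurable_const)
      (hJ.comp (measurable_pi_apply i)) fun x => hC (x i)
  simp_rw [topQuantileAvg_eq]
  rw [integral_const_mul, integral_finsetSum _ fun i _ => hsummand_int i]
  simp only [hsummand, Finset.sum_const, Finset.card_univ, Fintype.card_fin, nsmul_eq_mul]
  push_cast
  ring

lemma measureReal_exceedCount_deviation_le (hY : Measurable Y) (c : ℝ) (m : ℕ) {t : ℝ}
    (ht : 0 < t) :
    (Measure.pi fun _ : Fin m => μ).real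
        {z | t ≤ |(exceedCount Y c z : ℝ) - m * μ.real {ω | c < Y ω}|} ≤ m / (4 * t ^ 2) := by
  set π := Measure.pi fun _ : Fin m => μ
  set s := {ω | c < Y ω}
  have hs : MeasurableSet s := measurableSet_lt measurable_const hY
  set ind := s.indicator fun _ => (1 : ℝ)
  have hind : MemLp ind 2 μ := memLp_indicator_const 2 hs 1 (Or.inr (measure_ne_top μ s))
  have hind_meas : Measurable ind := measurable_const.indicator hs
  set X : (Fin m → Ω) → ℝ := ∑ j : Fin m, fun z => ind (z j)
  have hX_eq (z : Fin m → Ω) : (exceedCount Y c z : ℝ) = X z := by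
    simp only [exceedCount_eq_sum_indicator, X, ind, s, Finset.sum_apply]
  have hX_mem : MemLp X 2 π :=
    memLp_finsetSum' _ fun j _ => hind.comp_measurePreserving (measurePreserving_eval _ j)
  have hX_mean : π[X] = m * μ.real s := by
    simp only [X, Finset.sum_apply]
    rw [integral_finsetSum _ fun j _ =>
      integrable_comp_eval (hind.integrable one_le_two)]
    have hterm (j : Fin m) : ∫ z, ind (z j) ∂π = μ.real s := by
      rw [integral_comp_eval (μ := fun _ => μ) hind_meas.aestronglyMeasurable,
        integral_indicator_const _ hs, smul_eq_mul, mul_one]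
    rw [Finset.sum_congr rfl fun j _ => hterm j]
    simp
  have hind_var : variance ind μ ≤ 1 / 4 := by
    have h01 : ∀ ω, ind ω ∈ Set.Icc (0 : ℝ) 1 := fun ω => by
      by_cases hω : ω ∈ s <;> simp [ind, hω]
    calc variance ind μ ≤ ((1 - 0) / 2) ^ 2 :=
          variance_le_sq_of_bounded (ae_of_all _ h01) hind_meas.aemeasurable
      _ = 1 / 4 := by norm_num
  have hX_var : variance X π ≤ m / 4 := by
    rw [variance_sum_pi fun _ => hind]
    calc ∑ _j : Fin m, variance ind μ ≤ ∑ _j : Fin m, (1 / 4 : ℝ) :=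
          Finset.sum_le_sum fun j _ => hind_var
      _ = m / 4 := by simp [div_eq_mul_inv]
  have hcheb := meas_ge_le_variance_div_sq hX_mem ht
  simp_rw [hX_eq, ← hX_mean]
  refine ENNReal.toReal_le_of_le_ofReal (by positivity)
    (hcheb.trans (ENNReal.ofReal_le_ofReal ?_))
  calc variance X π / t ^ 2 ≤ m / 4 / t ^ 2 := by gcongr
    _ = m / (4 * t ^ 2) := by rw [div_div]

lemma tendsto_measureReal_exceedCount_deviation (hY : Measurable Y) (c : ℝ) {ε : ℝ}
    (hε : 0 < ε) :
    Tendsto (fun m : ℕ => (Measure.pi fun _ : Fin m => μ).real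
        {z | m * ε ≤ |(exceedCount Y c z : ℝ) - m * μ.real {ω | c < Y ω}|}) atTop (𝓝 0) := by
  refine squeeze_zero' (Eventually.of_forall fun m => measureReal_nonneg)
    ((eventually_gt_atTop 0).mono fun m hm => ?_)
    (tendsto_const_div_atTop_nhds_zero_nat (1 / (4 * ε ^ 2)))
  have hm' : (0 : ℝ) < m := Nat.cast_pos.2 hm
  refine (measureReal_exceedCount_deviation_le μ hY c m (mul_pos hm' hε)).trans_eq ?_
  field_simp

lemma monotone_fewExceedProb (m k : ℕ) : Monotone (fewExceedProb μ Y m k) := by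
  intro c c' hcc'
  refine measureReal_mono (ofPred_subset_ofPred.2 fun z hz => lt_of_le_of_lt ?_ hz)
  exact Finset.card_le_card (Finset.monotone_filter_right _ fun j _ hj => hcc'.trans_lt hj)

variable {k : ℕ → ℕ} {η : ℝ}

lemma tendsto_fewExceedProb_of_lt (hY : Measurable Y)
    (hk : Tendsto (fun m => (k m : ℝ) / m) atTop (𝓝 η)) {c : ℝ}
    (hc : μ.real {ω | c < Y ω} < η) :
    Tendsto (fun m => fewExceedProb μ Y m (k m) c) atTop (𝓝 1) := by
  set p := μ.real {ω | c < Y ω}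
  obtain ⟨ε, hε, hpε⟩ : ∃ ε, 0 < ε ∧ p + ε < η := ⟨(η - p) / 2, by linarith, by linarith⟩
  have hsep : ∀ᶠ m in atTop, p + ε < k m / m := hk.eventually (lt_mem_nhds hpε)
  have hmeas (m : ℕ) : MeasurableSet {z : Fin m → Ω | exceedCount Y c z < k m} :=
    measurableSet_lt (measurable_exceedCount hY measurable_const measurable_id) measurable_const
  suffices h : Tendsto (fun m => (Measure.pi fun _ : Fin m => μ).real
      {z | exceedCount Y c z < k m}ᶜ) atTop (𝓝 0) by
    simpa [fewExceedProb, probReal_compl_eq_one_sub (hmeas _)] using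
      (tendsto_const_nhds (x := (1 : ℝ))).sub h
  refine squeeze_zero' (Eventually.of_forall fun m => measureReal_nonneg)
    ((hsep.and (eventually_gt_atTop 0)).mono fun m ⟨hm, hm0⟩ => measureReal_mono ?_)
    (tendsto_measureReal_exceedCount_deviation μ hY c hε)
  intro z hz
  rw [Set.mem_ofPred_eq]
  have hm0' : (0 : ℝ) < m := Nat.cast_pos.2 hm0
  have hkz : (k m : ℝ) ≤ exceedCount Y c z := by
    exact_mod_cast not_lt.1 (Set.notMem_ofPred_iff.1 hz)
  rw [lt_div_iff₀ hm0'] at hm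
  refine le_abs.2 (Or.inl ?_)
  linarith

lemma tendsto_fewExceedProb_of_gt (hY : Measurable Y)
    (hk : Tendsto (fun m => (k m : ℝ) / m) atTop (𝓝 η)) {c : ℝ}
    (hc : η < μ.real {ω | c < Y ω}) :
    Tendsto (fun m => fewExceedProb μ Y m (k m) c) atTop (𝓝 0) := by
  set p := μ.real {ω | c < Y ω}
  obtain ⟨ε, hε, hpε⟩ : ∃ ε, 0 < ε ∧ η < p - ε := ⟨(p - η) / 2, by linarith, by linarith⟩
  have hsep : ∀ᶠ m in atTop, k m / m < p - ε := hk.eventually (gt_mem_nhds hpε)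
  refine squeeze_zero' (Eventually.of_forall fun m => measureReal_nonneg)
    ((hsep.and (eventually_gt_atTop 0)).mono fun m ⟨hm, hm0⟩ => measureReal_mono ?_)
    (tendsto_measureReal_exceedCount_deviation μ hY c hε)
  intro z hz
  rw [Set.mem_ofPred_eq]
  have hm0' : (0 : ℝ) < m := Nat.cast_pos.2 hm0
  have hkz : (exceedCount Y c z : ℝ) < k m := by exact_mod_cast hz
  rw [div_lt_iff₀ hm0'] at hm
  refine le_abs.2 (Or.inr ?_)
  linarith

lemma cdf_map (hY : Measurable Y) (x : ℝ) : cdf (μ.map Y) x = μ.real {ω | Y ω ≤ x} := by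
  have := Measure.isProbabilityMeasure_map (μ := μ) hY.aemeasurable
  rw [cdf_eq_real, map_measureReal_apply hY measurableSet_Iic]
  rfl

lemma measureReal_lt_eq_one_sub_cdf_map (hY : Measurable Y) (c : ℝ) :
    μ.real {ω | c < Y ω} = 1 - cdf (μ.map Y) c := by
  rw [cdf_map μ hY, ← probReal_compl_eq_one_sub (measurableSet_le hY measurable_const)]
  congr 1
  ext ω
  simp

lemma measureReal_le_eq_one_sub_cdf_map (hY : Measurable Y) [NullSingletonClass (μ.map Y)]
    (c : ℝ) : μ.real {ω | c ≤ Y ω} = 1 - cdf (μ.map Y) c := by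
  rw [← measureReal_lt_eq_one_sub_cdf_map μ hY]
  calc μ.real {ω | c ≤ Y ω} = (μ.map Y).real (Ici c) :=
        (map_measureReal_apply hY measurableSet_Ici).symm
    _ = (μ.map Y).real (Ioi c) := measureReal_congr Ioi_ae_eq_Ici.symm
    _ = μ.real {ω | c < Y ω} := map_measureReal_apply hY measurableSet_Ioi

variable [NullSingletonClass (μ.map Y)]

lemma measureReal_upperQuantile_le (hY : Measurable Y) (hη : η ∈ Ioo 0 1) :
    μ.real {ω | upperQuantile (μ.map Y) η ≤ Y ω} = η := by
  have := Measure.isProbabilityMeasure_map (μ := μ) hY.aemeasurable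
  rw [measureReal_le_eq_one_sub_cdf_map μ hY, cdf_upperQuantile hη, sub_sub_cancel]

lemma ae_tendsto_fewExceedProb (hY : Measurable Y) (hη : η ∈ Ioo 0 1)
    (hk : Tendsto (fun m => (k m : ℝ) / m) atTop (𝓝 η)) :
    ∀ᵐ ω ∂μ, Tendsto (fun m => fewExceedProb μ Y m (k m) (Y ω)) atTop
      (𝓝 ({ω | upperQuantile (μ.map Y) η ≤ Y ω}.indicator 1 ω)) := by
  have := Measure.isProbabilityMeasure_map (μ := μ) hY.aemeasurable
  have hlevel : ∀ᵐ ω ∂μ, cdf (μ.map Y) (Y ω) ≠ 1 - η := by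
    have h := measure_setOf_cdf_eq (μ.map Y) (r := 1 - η) (by linarith [hη.2])
      (by linarith [hη.1])
    rw [Measure.map_apply hY
      (measurableSet_eq_fun (continuous_cdf _).measurable measurable_const)] at h
    exact measure_eq_zero_iff_ae_notMem.1 h
  filter_upwards [hlevel] with ω hω
  set s := {ω | upperQuantile (μ.map Y) η ≤ Y ω}
  rcases hω.lt_or_gt with hlt | hgt
  · have hωs : ω ∉ s := fun h => ((upperQuantile_le_iff hη _).1 h).not_gt hlt
    rw [indicator_of_notMem hωs]
    exact tendsto_fewExceedProb_of_gt μ hY hk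
      (by rw [measureReal_lt_eq_one_sub_cdf_map μ hY]; linarith)
  · have hωs : ω ∈ s := (upperQuantile_le_iff hη _).2 hgt.le
    rw [indicator_of_mem hωs, Pi.one_apply]
    exact tendsto_fewExceedProb_of_lt μ hY hk
      (by rw [measureReal_lt_eq_one_sub_cdf_map μ hY]; linarith)

end Sampling

end TopQuantile

open TopQuantile

theorem reta_limit_eq_condExp_general
    {Ω : Type*} [MeasurableSpace Ω] (μ : Measure Ω) [IsProbabilityMeasure μ]
    (Y : Ω → ℝ) (hY : Measurable Y)
    (hatomless : ∀ c : ℝ, μ {ω | Y ω = c} = 0)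
    (J : Ω → ℝ) (hJmeas : Measurable J) (hJbdd : ∃ C : ℝ, ∀ ω, |J ω| ≤ C)
    (F : ℝ → ℝ) (hF : ∀ x, F x = (μ {ω | Y ω ≤ x}).toReal)
    (Θ : ℝ → ℝ) (hΘ : ∀ t, Θ t = sInf {x : ℝ | 1 - t ≤ F x})
    (η : ℝ) (hη : η ∈ Set.Ioo (0 : ℝ) 1) :
    Tendsto
      (fun n => ∫ x : Fin n → Ω, topQuantileAvg Y J ⌊η * n⌋₊ x
        ∂(Measure.pi fun _ : Fin n => μ))
      atTop
      (nhds (∫ ω, J ω ∂(ProbabilityTheory.cond μ {ω | Θ η ≤ Y ω}))) := by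
  obtain ⟨C, hC⟩ := hJbdd
  have : NullSingletonClass (μ.map Y) :=
    ⟨fun c => by rw [Measure.map_apply hY (measurableSet_singleton c)]; exact hatomless c⟩
  have hΘη : Θ η = upperQuantile (μ.map Y) η := by
    simp only [hΘ, upperQuantile, hF, cdf_map μ hY, measureReal_def]
  have hinner : Tendsto
      (fun m : ℕ => ∫ a, J a * fewExceedProb μ Y m ⌊η * (m + 1 : ℕ)⌋₊ (Y a) ∂μ) atTop
      (𝓝 (∫ a in {ω | Θ η ≤ Y ω}, J a ∂μ)) := by
    refine tendsto_integral_mul_of_ae_tendsto_indicator hJmeas hC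
      (fun m => (monotone_fewExceedProb μ _ _).measurable.comp hY)
      (fun m a => ⟨measureReal_nonneg, measureReal_le_one⟩)
      (measurableSet_le measurable_const hY) ?_
    rw [hΘη]
    exact ae_tendsto_fewExceedProb μ hY hη (tendsto_natFloor_mul_succ_div hη.1.le)
  have hprefactor :
      Tendsto (fun m : ℕ => (⌊η * (m + 1 : ℕ)⌋₊ : ℝ)⁻¹ * (m + 1)) atTop (𝓝 η⁻¹) := by
    refine ((tendsto_natFloor_mul_succ_div_succ hη.1.le).inv₀ hη.1.ne').congr fun m => ?_
    push_cast
    rw [inv_div, div_eq_inv_mul]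
  rw [← tendsto_add_atTop_iff_nat 1, integral_cond, hΘη, measureReal_upperQuantile_le μ hY hη,
    ← hΘη]
  simp_rw [integral_topQuantileAvg μ hY hJmeas hC]
  exact hprefactor.mul hinner

/-- Let `μ` be a probability measure on `Ω`, `Y : Ω → ℝ` measurable with
atomless law (continuous CDF `F`), and `J : Ω → ℝ` bounded and measurable. Let `η ∈ (0,1)` be a
continuity point of the upper quantile function `Θ η = inf {x : F x ≥ 1 - η}`, and assume `F` is
continuous at `Θ η`. For i.i.d. samples `ω_1, …, ω_n ∼ μ` (modeled by the product measure on
`Fin n → Ω`), let `T_n` be the average of `J` over the `⌊ηn⌋` samples with the largest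
`Y`-values. Then `lim_{n→∞} E[T_n] = E[J | Y ≥ Θ η]` (the expectation of `J` under the
conditional measure given the event `{Y ≥ Θ η}`). -/
theorem reta_limit_eq_condExp
    {Ω : Type*} [MeasurableSpace Ω] (μ : Measure Ω) [IsProbabilityMeasure μ]
    (Y : Ω → ℝ) (hY : Measurable Y)
    (hatomless : ∀ c : ℝ, μ {ω | Y ω = c} = 0)
    (J : Ω → ℝ) (hJmeas : Measurable J) (hJbdd : ∃ C : ℝ, ∀ ω, |J ω| ≤ C)
    (F : ℝ → ℝ) (hF : ∀ x, F x = (μ {ω | Y ω ≤ x}).toReal)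
    (Θ : ℝ → ℝ) (hΘ : ∀ t, Θ t = sInf {x : ℝ | 1 - t ≤ F x})
    (η : ℝ) (hη : η ∈ Set.Ioo (0 : ℝ) 1)
    (hcontΘ : ContinuousAt Θ η) (hcontF : ContinuousAt F (Θ η)) :
    Tendsto
      (fun n => ∫ x : Fin n → Ω, topQuantileAvg Y J ⌊η * n⌋₊ x
        ∂(Measure.pi fun _ : Fin n => μ))
      atTop
      (nhds (∫ ω, J ω ∂(ProbabilityTheory.cond μ {ω | Θ η ≤ Y ω}))) :=
  reta_limit_eq_condExp_general μ Y hY hatomless J hJmeas hJbdd F hF Θ hΘ η hη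
end

section
/- Let (Ω, μ) be a probability space, Y : Ω → ℝ measurable with atomless law (continuous CDF F), and J : Ω → ℝ bounded and measurable. Let η ∈ (0,1) be a continuity point of the upper quantile function Θ(η) = inf{x ∈ ℝ : F(x) ≥ 1 − η}. For n with ⌊ηn⌋ ≥ 1 and i.i.d. samples ω_1,…,ω_n ∼ μ, let T_n = (1/⌊ηn⌋) Σ_{j=1}^{⌊ηn⌋} J(ω_{(j)}), where ω_{(j)} is the sample with the j-th largest Y-value (almost surely unique). Then lim_{n→∞} E[T_n] = (1/η) · E[J · 1{Y ≥ Θ(η)}]. -/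
/-!
Writing the `i`-th sample as `a` inserted into `n - 1` fresh ones and integrating `a` last
(Fubini), every summand of `T_n` has expectation `∫ J(a) P(a) dμ(a)`, where `P(a)` is the
probability that fewer than `k = ⌊ηn⌋` of the `n - 1` fresh samples score above `Y a`; hence
`E[T_n] = (n / k) ∫ J P dμ`. The number of fresh samples above `Y a` is binomial with parameter
`μ(Y > Y a)`, so by Chebyshev `P(a) → 1` when `μ(Y > Y a) < η` and `P(a) → 0` when
`μ(Y > Y a) > η`. The level set `μ(Y > Y a) = η` is null: the values `c` with `μ(Y > c) = η` form
an interval on which the tail of `Y` is constant, which carries no mass except possibly at its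
endpoints, and these are not atoms. Dominated convergence gives the limit
`η⁻¹ ∫_{μ(Y > Y a) < η} J dμ`, and up to a null set this event is `{Y ≥ Θ η}`.
-/

open MeasureTheory Filter Set

open ProbabilityTheory Finset Topology

lemma measurable_card_filter {β ι : Type*} [MeasurableSpace β] [Fintype ι] {q : β → ι → Prop}
    [∀ b, DecidablePred (q b)] (hq : ∀ i, MeasurableSet {b | q b i}) :
    Measurable fun b => #{i | q b i} := by
  simp_rw [Finset.card_filter]
  exact Finset.measurable_sum _ fun i _ => Measurable.ite (hq i) measurable_const measurable_const

lemma card_filter_lt_insertNth {α β : Type*} [LinearOrder β] (f : α → β) {m : ℕ}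
    (i : Fin (m + 1)) (a : α) (y : Fin m → α) :
    #{l | f a < f ((Fin.insertNth i a y : Fin (m + 1) → α) l)} = #{l | f a < f (y l)} := by
  rw [Finset.card_filter, Finset.card_filter, Fin.sum_univ_succAbove _ i]
  simp

lemma tendsto_floor_mul_div_sub_one {η : ℝ} (hη : 0 ≤ η) :
    Tendsto (fun n : ℕ => (⌊η * n⌋₊ : ℝ) / (n - 1 : ℕ)) atTop (𝓝 η) := by
  have hfloor : Tendsto (fun n : ℕ => (⌊η * n⌋₊ : ℝ) / n) atTop (𝓝 η) :=
    (tendsto_nat_floor_mul_div_atTop hη).comp tendsto_natCast_atTop_atTop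
  have h := hfloor.mul (tendsto_natCast_div_add_atTop (-1 : ℝ))
  rw [mul_one] at h
  refine h.congr' ?_
  filter_upwards [eventually_ge_atTop 2] with n hn
  have hn' : (2 : ℝ) ≤ n := by exact_mod_cast hn
  rw [Nat.cast_sub (by omega), Nat.cast_one]
  field_simp
  ring

section Binomial

variable {Ω : Type*} [MeasurableSpace Ω] {μ : Measure Ω} [IsProbabilityMeasure μ]
  {p : Ω → Prop} [DecidablePred p]

lemma measureReal_le_abs_card_sub_le (hp : MeasurableSet {x | p x}) (m : ℕ) {t : ℝ}
    (ht : 0 < t) :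
    (Measure.pi fun _ : Fin m => μ).real
        {y | t ≤ |(#{l | p (y l)} : ℝ) - m * μ.real {x | p x}|} ≤ m / (4 * t ^ 2) := by
  set X : Ω → ℝ := {x | p x}.indicator 1
  have hXm : AEStronglyMeasurable X μ := (measurable_one.indicator hp).aestronglyMeasurable
  have hXb : ∀ᵐ ω ∂μ, X ω ∈ Icc (0 : ℝ) 1 :=
    ae_of_all _ fun ω => by by_cases h : p ω <;> simp [X, h]
  have hX : MemLp X 2 μ := memLp_of_bounded hXb hXm 2
  set S : (Fin m → Ω) → ℝ := ∑ l, fun y => X (y l)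
  have hS : ∀ y, S y = #{l | p (y l)} := fun y => by simp [S, X, Set.indicator_apply]
  have hmean : ∫ y, S y ∂(Measure.pi fun _ : Fin m => μ) = m * μ.real {x | p x} := by
    have hXl : ∀ l : Fin m, ∫ y, X (y l) ∂(Measure.pi fun _ => μ) = μ.real {x | p x} :=
      fun l => by rw [integral_comp_eval hXm]; exact integral_indicator_one hp
    simp only [S, Finset.sum_apply]
    rw [integral_finsetSum _ fun l _ => integrable_comp_eval (hX.integrable one_le_two)]
    simp [hXl]
  have hvar : Var[S; Measure.pi fun _ : Fin m => μ] ≤ m / 4 := by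
    rw [variance_sum_pi fun _ => hX]
    calc ∑ _l : Fin m, Var[X; μ] ≤ ∑ _l : Fin m, ((1 - 0) / 2 : ℝ) ^ 2 :=
          Finset.sum_le_sum fun _ _ => variance_le_sq_of_bounded hXb hXm.aemeasurable
      _ = m / 4 := by simp; ring
  have hSL2 : MemLp S 2 (Measure.pi fun _ : Fin m => μ) :=
    memLp_finsetSum' _ fun l _ => hX.comp_measurePreserving (measurePreserving_eval _ l)
  refine ENNReal.toReal_le_of_le_ofReal (by positivity) ?_
  calc _ = (Measure.pi fun _ : Fin m => μ)
        {y | t ≤ |S y - ∫ y, S y ∂(Measure.pi fun _ => μ)|} := by rw [hmean]; simp only [hS]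
    _ ≤ ENNReal.ofReal (Var[S; Measure.pi fun _ : Fin m => μ] / t ^ 2) :=
        meas_ge_le_variance_div_sq hSL2 ht
    _ ≤ ENNReal.ofReal (m / 4 / t ^ 2) := by gcongr
    _ = ENNReal.ofReal (m / (4 * t ^ 2)) := by rw [div_div]

lemma tendsto_measureReal_mul_le_abs_card_sub (hp : MeasurableSet {x | p x}) {δ : ℝ}
    (hδ : 0 < δ) :
    Tendsto (fun m : ℕ => (Measure.pi fun _ : Fin m => μ).real
        {y | m * δ ≤ |(#{l | p (y l)} : ℝ) - m * μ.real {x | p x}|}) atTop (𝓝 0) := by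
  refine squeeze_zero' (Eventually.of_forall fun _ => measureReal_nonneg) ?_
    (tendsto_const_div_atTop_nhds_zero_nat (4 * δ ^ 2)⁻¹)
  filter_upwards [eventually_gt_atTop 0] with m hm
  have hm' : (0 : ℝ) < m := Nat.cast_pos.2 hm
  calc _ ≤ m / (4 * (m * δ) ^ 2) := measureReal_le_abs_card_sub_le hp m (by positivity)
    _ = (4 * δ ^ 2)⁻¹ / m := by field_simp

lemma tendsto_measureReal_card_lt (hp : MeasurableSet {x | p x}) {m k : ℕ → ℕ} {η : ℝ}
    (hm : Tendsto m atTop atTop) (hk : Tendsto (fun n => (k n : ℝ) / m n) atTop (𝓝 η))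
    (hη : μ.real {x | p x} ≠ η) :
    Tendsto (fun n => (Measure.pi fun _ : Fin (m n) => μ).real {y | #{l | p (y l)} < k n})
      atTop (𝓝 (if μ.real {x | p x} < η then 1 else 0)) := by
  set q := μ.real {x | p x}
  have hpos : ∀ᶠ n in atTop, (0 : ℝ) < m n := by
    filter_upwards [hm.eventually_gt_atTop 0] with n hn using Nat.cast_pos.2 hn
  rcases lt_or_gt_of_ne hη with hlt | hgt
  · rw [if_pos hlt]
    have hdev := (tendsto_measureReal_mul_le_abs_card_sub (μ := μ) hp
      (half_pos (sub_pos.2 hlt))).comp hm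
    refine tendsto_of_tendsto_of_tendsto_of_le_of_le' (by simpa using hdev.const_sub 1)
      tendsto_const_nhds ?_ (Eventually.of_forall fun _ => measureReal_le_one)
    filter_upwards [hpos, hk.eventually (lt_mem_nhds (show q + (η - q) / 2 < η by linarith))]
      with n hn hkn
    rw [lt_div_iff₀ hn] at hkn
    have hsub : {y : Fin (m n) → Ω | #{l | p (y l)} < k n}ᶜ
        ⊆ {y | m n * ((η - q) / 2) ≤ |(#{l | p (y l)} : ℝ) - m n * q|} := fun y hy => by
      have : (k n : ℝ) ≤ #{l | p (y l)} := by
        exact_mod_cast not_lt.1 (show ¬ #{l | p (y l)} < k n from hy)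
      show (_ : ℝ) ≤ |_|
      exact le_abs.2 (Or.inl (by linarith))
    have := measureReal_mono (μ := Measure.pi fun _ : Fin (m n) => μ) hsub
    have hmeas : MeasurableSet {y : Fin (m n) → Ω | #{l | p (y l)} < k n} :=
      measurable_card_filter (fun l => hp.preimage (measurable_pi_apply l)) measurableSet_Iio
    rw [probReal_compl_eq_one_sub hmeas] at this
    linarith
  · rw [if_neg (not_lt.2 hgt.le)]
    have hdev := (tendsto_measureReal_mul_le_abs_card_sub (μ := μ) hp
      (half_pos (sub_pos.2 hgt))).comp hm
    refine squeeze_zero' (Eventually.of_forall fun _ => measureReal_nonneg) ?_ hdev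
    filter_upwards [hpos, hk.eventually (gt_mem_nhds (show η < q - (q - η) / 2 by linarith))]
      with n hn hkn
    rw [div_lt_iff₀ hn] at hkn
    refine measureReal_mono (μ := Measure.pi fun _ : Fin (m n) => μ) fun y hy => ?_
    have : (#{l | p (y l)} : ℝ) < k n := by exact_mod_cast hy
    show (_ : ℝ) ≤ |_|
    exact le_abs.2 (Or.inr (by linarith))

end Binomial

section Quantile

lemma nonempty_setOf_le_cdf (ν : Measure ℝ) {v : ℝ} (hv : v < 1) :
    {x | v ≤ cdf ν x}.Nonempty :=
  ((tendsto_cdf_atTop ν).eventually (eventually_ge_nhds hv)).exists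

lemma bddBelow_setOf_le_cdf (ν : Measure ℝ) {v : ℝ} (hv : 0 < v) :
    BddBelow {x | v ≤ cdf ν x} := by
  obtain ⟨x₀, hx₀⟩ :=
    eventually_atBot.1 ((tendsto_cdf_atBot ν).eventually (eventually_lt_nhds hv))
  exact ⟨x₀, fun x hx => le_of_not_gt fun h => (hx₀ x h.le).not_ge hx⟩

variable {Ω : Type*} [MeasurableSpace Ω] {μ : Measure Ω} {Y : Ω → ℝ}

lemma measure_levelSet_measureReal_lt_eq_zero [IsFiniteMeasure μ]
    (hatomless : ∀ c, μ {ω | Y ω = c} = 0) (hY : Measurable Y) (r : ℝ) :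
    μ {a | μ.real {x | Y a < Y x} = r} = 0 := by
  set T := {c : ℝ | μ.real {x | c < Y x} = r}
  have hflat : ∀ b ∈ T, ∀ d ∈ T, b ≤ d → μ (Y ⁻¹' Ioc b d) = 0 := fun b hb d hd hbd => by
    have hdiff : Y ⁻¹' Ioc b d = {x | b < Y x} \ {x | d < Y x} := by ext; simp
    rw [← measureReal_eq_zero_iff, hdiff, measureReal_sdiff
      (ofPred_subset_ofPred.2 fun x hx => hbd.trans_lt hx) (measurableSet_lt measurable_const hY),
      hb, hd, sub_self]
  have hcover : {a | Y a ∈ T} ⊆ (⋃ (q : ℚ) (s : ℚ) (_ : μ (Y ⁻¹' Ioc (q : ℝ) s) = 0),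
      Y ⁻¹' Ioc (q : ℝ) s) ∪ {a | Y a = sInf T} ∪ {a | Y a = sSup T} := by
    intro a (ha : Y a ∈ T)
    by_cases hmin : IsLeast T (Y a)
    · exact Or.inl (Or.inr hmin.csInf_eq.symm)
    by_cases hmax : IsGreatest T (Y a)
    · exact Or.inr hmax.csSup_eq.symm
    obtain ⟨b, hb, hba⟩ : ∃ b ∈ T, b < Y a := by simpa [IsLeast, lowerBounds, ha] using hmin
    obtain ⟨d, hd, had⟩ : ∃ d ∈ T, Y a < d := by simpa [IsGreatest, upperBounds, ha] using hmax
    obtain ⟨q, hbq, hqa⟩ := exists_rat_btwn hba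
    obtain ⟨s, has, hsd⟩ := exists_rat_btwn had
    refine Or.inl (Or.inl (mem_iUnion₂.2 ⟨q, s, mem_iUnion.2 ⟨?_, hqa, has.le⟩⟩))
    exact measure_mono_null (preimage_mono (Ioc_subset_Ioc hbq.le hsd.le))
      (hflat b hb d hd (hba.trans had).le)
  refine measure_mono_null hcover
    (measure_union_null (measure_union_null ?_ (hatomless _)) (hatomless _))
  exact measure_iUnion_null fun q => measure_iUnion_null fun s => measure_iUnion_null fun h => h

variable [IsProbabilityMeasure μ]

lemma cdf_map_eq_measureReal (hY : Measurable Y) (c : ℝ) :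
    cdf (μ.map Y) c = μ.real {x | Y x ≤ c} := by
  have := Measure.isProbabilityMeasure_map (μ := μ) hY.aemeasurable
  rw [cdf_eq_real, map_measureReal_apply hY measurableSet_Iic]
  rfl

lemma measureReal_lt_eq_one_sub_cdf_map (hY : Measurable Y) (c : ℝ) :
    μ.real {x | c < Y x} = 1 - cdf (μ.map Y) c := by
  rw [cdf_map_eq_measureReal hY,
    ← probReal_compl_eq_one_sub (measurableSet_le hY measurable_const)]
  congr 1 with x
  simp

lemma setOf_sInf_le_ae_eq (hatomless : ∀ c, μ {ω | Y ω = c} = 0) (hY : Measurable Y) {η : ℝ}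
    (hη : η ∈ Set.Ioo 0 1) :
    {ω | sInf {x | 1 - η ≤ cdf (μ.map Y) x} ≤ Y ω} =ᵐ[μ] {ω | μ.real {x | Y ω < Y x} < η} := by
  set Θ := sInf {x | 1 - η ≤ cdf (μ.map Y) x}
  have hbelow : ∀ c < Θ, η < μ.real {x | c < Y x} := fun c hc => by
    have := notMem_of_lt_csInf hc (bddBelow_setOf_le_cdf _ (by linarith [hη.2]))
    rw [mem_ofPred_eq, not_le] at this
    rw [measureReal_lt_eq_one_sub_cdf_map hY]
    linarith
  have habove : ∀ c, Θ < c → μ.real {x | c < Y x} ≤ η := fun c hc => by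
    obtain ⟨b, hb, hbc⟩ :=
      exists_lt_of_csInf_lt (nonempty_setOf_le_cdf _ (by linarith [hη.1])) hc
    have := hb.trans ((cdf _).mono hbc.le)
    rw [measureReal_lt_eq_one_sub_cdf_map hY]
    linarith
  filter_upwards
    [measure_eq_zero_iff_ae_notMem.1 (measure_levelSet_measureReal_lt_eq_zero hatomless hY η),
      measure_eq_zero_iff_ae_notMem.1 (hatomless Θ)] with ω hlevel hatom
  change μ.real {x | Y ω < Y x} ≠ η at hlevel
  change Y ω ≠ Θ at hatom
  change (Θ ≤ Y ω) = (μ.real {x | Y ω < Y x} < η)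
  exact propext ⟨fun h => lt_of_le_of_ne (habove _ (lt_of_le_of_ne h hatom.symm)) hlevel,
    fun h => not_lt.1 fun h' => lt_asymm (hbelow _ h') h⟩

end Quantile

section Selection

variable {Ω : Type*} [MeasurableSpace Ω] {μ : Measure Ω} [IsProbabilityMeasure μ] {Y J : Ω → ℝ}

variable (μ Y) in
noncomputable def probFewerAbove (m k : ℕ) (c : ℝ) : ℝ :=
  (Measure.pi fun _ : Fin m => μ).real {y | #{l | c < Y (y l)} < k}

lemma measurable_probFewerAbove (hY : Measurable Y) (m k : ℕ) :
    Measurable (probFewerAbove μ Y m k) := by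
  have hE : MeasurableSet {z : ℝ × (Fin m → Ω) | #{l | z.1 < Y (z.2 l)} < k} :=
    measurable_card_filter (fun l => measurableSet_lt measurable_fst (by fun_prop))
      measurableSet_Iio
  exact (measurable_measure_prodMk_left hE).ennreal_toReal

lemma integral_ite_card_lt (hY : Measurable Y) (hJ : Integrable J μ) (m k : ℕ)
    (i : Fin (m + 1)) :
    ∫ x : Fin (m + 1) → Ω, (if #{l | Y (x i) < Y (x l)} < k then J (x i) else 0)
        ∂(Measure.pi fun _ => μ)
      = ∫ a, J a * probFewerAbove μ Y m k (Y a) ∂μ := by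
  set S := {z : Ω × (Fin m → Ω) | #{l | Y z.1 < Y (z.2 l)} < k}
  have hS : MeasurableSet S :=
    measurable_card_filter (fun l => measurableSet_lt (by fun_prop) (by fun_prop))
      measurableSet_Iio
  rw [← (measurePreserving_piFinSuccAbove (fun _ => μ) i).symm.integral_comp']
  simp only [MeasurableEquiv.piFinSuccAbove_symm_apply, Fin.insertNthEquiv_apply,
    Fin.insertNth_apply_same, card_filter_lt_insertNth]
  have hind : (fun z : Ω × (Fin m → Ω) => if #{l | Y z.1 < Y (z.2 l)} < k then J z.1 else 0)
      = S.indicator (fun z => J z.1) := funext fun z => by simp [S, Set.indicator_apply]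
  rw [hind, integral_prod _ ((hJ.comp_fst _).indicator hS)]
  congr 1 with a
  calc _ = ∫ y, (Prod.mk a ⁻¹' S).indicator (fun _ => J a) y ∂(Measure.pi fun _ => μ) := rfl
    _ = _ := by
      rw [integral_indicator_const _ (measurable_prodMk_left hS), smul_eq_mul, mul_comm]
      rfl

lemma integral_topQuantileAvg (hY : Measurable Y) (hJ : Integrable J μ) (m k : ℕ) :
    ∫ x : Fin (m + 1) → Ω, topQuantileAvg Y J k x ∂(Measure.pi fun _ => μ)
      = (k : ℝ)⁻¹ * (m + 1) * ∫ a, J a * probFewerAbove μ Y m k (Y a) ∂μ := by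
  have hint : ∀ i : Fin (m + 1), Integrable
      (fun x => if #{l | Y (x i) < Y (x l)} < k then J (x i) else 0) (Measure.pi fun _ => μ) := by
    intro i
    have hmeas : MeasurableSet {x : Fin (m + 1) → Ω | #{l | Y (x i) < Y (x l)} < k} :=
      measurable_card_filter (fun l => measurableSet_lt (by fun_prop) (by fun_prop))
        measurableSet_Iio
    refine ((integrable_comp_eval (i := i) hJ).indicator hmeas).congr (ae_of_all _ fun x => ?_)
    simp [Set.indicator_apply]
  simp only [topQuantileAvg]
  rw [integral_const_mul, integral_finsetSum _ fun i _ => hint i]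
  simp [integral_ite_card_lt hY hJ, mul_assoc]

lemma tendsto_integral_mul_probFewerAbove (hatomless : ∀ c, μ {ω | Y ω = c} = 0)
    (hY : Measurable Y) (hJ : Integrable J μ) {η : ℝ} (hη : η ∈ Set.Ioo 0 1) :
    Tendsto (fun n : ℕ => ∫ a, J a * probFewerAbove μ Y (n - 1) ⌊η * n⌋₊ (Y a) ∂μ) atTop
      (𝓝 (∫ a in {a | μ.real {x | Y a < Y x} < η}, J a ∂μ)) := by
  have htail : Measurable fun c : ℝ => μ.real {x | c < Y x} :=
    Antitone.measurable fun b c hbc => measureReal_mono fun x (hx : c < Y x) => hbc.trans_lt hx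
  have hset : MeasurableSet {a | μ.real {x | Y a < Y x} < η} :=
    measurableSet_lt (htail.comp hY) measurable_const
  rw [← integral_indicator hset]
  refine tendsto_integral_of_dominated_convergence (fun a => ‖J a‖)
    (fun n => hJ.1.mul ((measurable_probFewerAbove hY _ _).comp hY).aestronglyMeasurable)
    hJ.norm (fun n => ae_of_all _ fun a => ?_) ?_
  · rw [norm_mul, probFewerAbove, Real.norm_of_nonneg measureReal_nonneg]
    exact mul_le_of_le_one_right (norm_nonneg _) measureReal_le_one
  · filter_upwards [measure_eq_zero_iff_ae_notMem.1
      (measure_levelSet_measureReal_lt_eq_zero hatomless hY η)] with a ha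
    have := tendsto_measureReal_card_lt (μ := μ) (p := fun x => Y a < Y x)
      (measurableSet_lt measurable_const hY) (tendsto_sub_atTop_nat 1)
      (tendsto_floor_mul_div_sub_one hη.1.le) ha
    have hlim : {a | μ.real {x | Y a < Y x} < η}.indicator J a
        = J a * if μ.real {x | Y a < Y x} < η then 1 else 0 := by
      by_cases h : μ.real {x | Y a < Y x} < η <;> simp [h]
    rw [hlim]
    exact this.const_mul (J a)

end Selection

theorem reta_limit_eq_restricted_integral_general
    {Ω : Type*} [MeasurableSpace Ω] (μ : Measure Ω) [IsProbabilityMeasure μ]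
    (Y : Ω → ℝ) (hY : Measurable Y)
    (hatomless : ∀ c : ℝ, μ {ω | Y ω = c} = 0)
    (J : Ω → ℝ) (hJmeas : Measurable J) (hJbdd : ∃ C : ℝ, ∀ ω, |J ω| ≤ C)
    (F : ℝ → ℝ) (hF : ∀ x, F x = (μ {ω | Y ω ≤ x}).toReal)
    (Θ : ℝ → ℝ) (hΘ : ∀ t, Θ t = sInf {x : ℝ | 1 - t ≤ F x})
    (η : ℝ) (hη : η ∈ Set.Ioo (0 : ℝ) 1) :
    Tendsto
      (fun n => ∫ x : Fin n → Ω, topQuantileAvg Y J ⌊η * n⌋₊ x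
        ∂(Measure.pi fun _ : Fin n => μ))
      atTop
      (nhds (η⁻¹ * ∫ ω in {ω | Θ η ≤ Y ω}, J ω ∂μ)) := by
  obtain ⟨C, hC⟩ := hJbdd
  have hJ : Integrable J μ := Integrable.of_bound hJmeas.aestronglyMeasurable C (ae_of_all _ hC)
  have hΘη : Θ η = sInf {x | 1 - η ≤ cdf (μ.map Y) x} := by
    simp only [hΘ, hF, cdf_map_eq_measureReal hY]
    rfl
  have hcoef : Tendsto (fun n : ℕ => (⌊η * n⌋₊ : ℝ)⁻¹ * n) atTop (𝓝 η⁻¹) := by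
    simpa [div_eq_inv_mul] using ((tendsto_nat_floor_mul_div_atTop hη.1.le).comp
      tendsto_natCast_atTop_atTop).inv₀ hη.1.ne'
  rw [hΘη, setIntegral_congr_set (setOf_sInf_le_ae_eq hatomless hY hη)]
  refine (hcoef.mul (tendsto_integral_mul_probFewerAbove hatomless hY hJ hη)).congr' ?_
  filter_upwards [eventually_ge_atTop 1] with n hn
  obtain ⟨m, rfl⟩ := Nat.exists_eq_add_of_le' hn
  rw [integral_topQuantileAvg hY hJ]
  push_cast
  simp

/-- Let `μ` be a probability measure on `Ω`, `Y : Ω → ℝ` measurable with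
atomless law (continuous CDF `F`), and `J : Ω → ℝ` bounded and measurable. Let `η ∈ (0,1)` be a
continuity point of the upper quantile function `Θ η = inf {x : F x ≥ 1 - η}`. For i.i.d.
samples `ω_1, …, ω_n ∼ μ` (modeled by the product measure on `Fin n → Ω`), let `T_n` be the
average of `J` over the `⌊ηn⌋` samples with the largest `Y`-values. Then
`lim_{n→∞} E[T_n] = (1/η) · E[J · 1{Y ≥ Θ η}]`. -/
theorem reta_limit_eq_restricted_integral
    {Ω : Type*} [MeasurableSpace Ω] (μ : Measure Ω) [IsProbabilityMeasure μ]
    (Y : Ω → ℝ) (hY : Measurable Y)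
    (hatomless : ∀ c : ℝ, μ {ω | Y ω = c} = 0)
    (J : Ω → ℝ) (hJmeas : Measurable J) (hJbdd : ∃ C : ℝ, ∀ ω, |J ω| ≤ C)
    (F : ℝ → ℝ) (hF : ∀ x, F x = (μ {ω | Y ω ≤ x}).toReal)
    (Θ : ℝ → ℝ) (hΘ : ∀ t, Θ t = sInf {x : ℝ | 1 - t ≤ F x})
    (η : ℝ) (hη : η ∈ Set.Ioo (0 : ℝ) 1) (hcontΘ : ContinuousAt Θ η) :
    Tendsto
      (fun n => ∫ x : Fin n → Ω, topQuantileAvg Y J ⌊η * n⌋₊ x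
        ∂(Measure.pi fun _ : Fin n => μ))
      atTop
      (nhds (η⁻¹ * ∫ ω in {ω | Θ η ≤ Y ω}, J ω ∂μ)) :=
  reta_limit_eq_restricted_integral_general μ Y hY hatomless J hJmeas hJbdd F hF Θ hΘ η hη
end

section
/- Let (Ω, μ) be a probability space, Y : Ω → ℝ measurable with atomless law, and J : Ω → ℝ bounded and measurable. Fix η ∈ (0,1) and integers n ≤ N with ⌊ηn⌋ ≥ 1, and let a_1, …, a_N be i.i.d. samples from μ. For a subset S ⊆ {1,…,N} with |S| = n, let T(S) = (1/⌊ηn⌋) times the sum of J over the ⌊ηn⌋ elements of {a_i : i ∈ S} with the largest Y-values (almost surely unique). Then E[ (1/C(N,n)) · Σ_{S ⊆ {1,…,N}, |S| = n} T(S) ] = E[ (1/⌊ηn⌋) Σ_{j=1}^{⌊ηn⌋} J(a_{(j:n)}) ], where a_{(j:n)} is the sample with the j-th largest Y-value among n fresh i.i.d. samples a_1,…,a_n ∼ μ. -/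
/-!
A uniformly random `n`-subset of `N` i.i.d. samples is itself an i.i.d. sample of size `n`:
restricting the product measure `μ^N` to the coordinates of a fixed `n`-subset `S` gives `μ^n`,
and `T(S)` only reads those coordinates. Hence every summand `E[T(S)]` equals the expectation of
the top-`k` average of `n` fresh samples, and so does their average over the `C(N, n)` subsets.
-/

open MeasureTheory Finset

/-- `T(S)`: the average of `J` over the `k` elements of `{x i : i ∈ S}` with the largest
`Y`-values: an element is selected iff fewer than `k` elements of `S` have a strictly larger
`Y`-value. When the `Y`-values are pairwise distinct (almost surely the case for an atomless
law) and `1 ≤ k ≤ |S|`, exactly `k` elements are selected. -/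
noncomputable def topAvgOfSubset {Ω : Type*} (Y J : Ω → ℝ) (k : ℕ) {N : ℕ}
    (S : Finset (Fin N)) (x : Fin N → Ω) : ℝ :=
  (k : ℝ)⁻¹ * ∑ i ∈ S, if (S.filter fun l => Y (x i) < Y (x l)).card < k
    then J (x i) else 0

theorem measurePreserving_pi_comp_of_injective {ι κ α : Type*} [Fintype ι] [Fintype κ]
    [MeasurableSpace α] (μ : Measure α) [IsProbabilityMeasure μ] {e : ι → κ}
    (he : e.Injective) :
    MeasurePreserving (fun x : κ → α => x ∘ e) (Measure.pi fun _ => μ)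
      (Measure.pi fun _ => μ) := by
  classical
  refine ⟨by fun_prop, (Measure.pi_eq fun s hs => ?_).symm⟩
  have hpre : (fun x : κ → α => x ∘ e) ⁻¹' Set.univ.pi s
      = Set.univ.pi (Function.extend e s fun _ => Set.univ) := by
    ext x
    simp only [Set.mem_preimage, Set.mem_univ_pi, Function.comp_apply]
    refine ⟨fun h j => ?_, fun h i => by simpa [he.extend_apply] using h (e i)⟩
    by_cases hj : ∃ i, e i = j
    · obtain ⟨i, rfl⟩ := hj
      simpa [he.extend_apply] using h i
    · simp [Function.extend_apply' _ _ _ hj]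
  rw [Measure.map_apply (by fun_prop) (.univ_pi hs), hpre, Measure.pi_pi,
    ← Finset.prod_subset (Finset.subset_univ (univ.image e)) ?_, Finset.prod_image he.injOn]
  · simp [he.extend_apply]
  · intro j _ hj
    rw [Function.extend_apply' _ _ _ (by simpa using hj), measure_univ]

section topAvgOfSubset

variable {Ω : Type*} {Y J : Ω → ℝ} {k N : ℕ}

theorem topAvgOfSubset_map {n : ℕ} (s : Finset (Fin n)) (e : Fin n ↪ Fin N) (x : Fin N → Ω) :
    topAvgOfSubset Y J k (s.map e) x = topAvgOfSubset Y J k s (x ∘ e) := by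
  simp only [topAvgOfSubset, Finset.sum_map, Finset.filter_map, Finset.card_map,
    Function.comp_apply]

theorem abs_topAvgOfSubset_le {C : ℝ} (hC : ∀ ω, |J ω| ≤ C) (S : Finset (Fin N))
    (x : Fin N → Ω) :
    |topAvgOfSubset Y J k S x| ≤ (k : ℝ)⁻¹ * (#S * |C|) := by
  rw [topAvgOfSubset, abs_mul, abs_inv, Nat.abs_cast]
  gcongr
  refine (abs_sum_le_sum_abs _ _).trans ?_
  rw [← nsmul_eq_mul]
  refine Finset.sum_le_card_nsmul _ _ _ fun i _ => ?_
  split_ifs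
  · exact (hC _).trans (le_abs_self C)
  · simp

variable [MeasurableSpace Ω]

theorem measurable_topAvgOfSubset (hY : Measurable Y) (hJ : Measurable J)
    (S : Finset (Fin N)) :
    Measurable (topAvgOfSubset Y J k S) := by
  have hcard : ∀ i, Measurable fun x : Fin N → Ω => #(S.filter fun l => Y (x i) < Y (x l)) := by
    intro i
    simp_rw [Finset.card_filter]
    exact Finset.measurable_sum _ fun l _ => Measurable.ite
      (measurableSet_lt (by fun_prop) (by fun_prop)) measurable_const measurable_const
  refine (Finset.measurable_sum _ fun i _ => ?_).const_mul _
  exact Measurable.ite (measurableSet_lt (hcard i) measurable_const) (by fun_prop) measurable_const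

theorem integrable_topAvgOfSubset (μ : Measure (Fin N → Ω)) [IsFiniteMeasure μ]
    (hY : Measurable Y) (hJ : Measurable J) {C : ℝ} (hC : ∀ ω, |J ω| ≤ C)
    (S : Finset (Fin N)) :
    Integrable (topAvgOfSubset Y J k S) μ :=
  .of_bound (measurable_topAvgOfSubset hY hJ S).aestronglyMeasurable _
    (ae_of_all _ fun x => abs_topAvgOfSubset_le hC S x)

theorem integral_topAvgOfSubset_of_card_eq (μ : Measure Ω) [IsProbabilityMeasure μ]
    (hY : Measurable Y) (hJ : Measurable J) {n : ℕ} {S : Finset (Fin N)} (hS : #S = n) :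
    ∫ x, topAvgOfSubset Y J k S x ∂(Measure.pi fun _ => μ)
      = ∫ x, topAvgOfSubset Y J k univ x ∂(Measure.pi fun _ : Fin n => μ) := by
  set e := (S.orderEmbOfFin hS).toEmbedding
  have hproj := measurePreserving_pi_comp_of_injective μ e.injective
  rw [← S.map_orderEmbOfFin_univ hS]
  simp_rw [topAvgOfSubset_map]
  rw [← hproj.map_eq, integral_map hproj.measurable.aemeasurable
    (measurable_topAvgOfSubset hY hJ univ).aestronglyMeasurable]

end topAvgOfSubset

theorem reta_subset_estimator_unbiased_general
    {Ω : Type*} [MeasurableSpace Ω] (μ : Measure Ω) [IsProbabilityMeasure μ]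
    (Y : Ω → ℝ) (hY : Measurable Y)
    (J : Ω → ℝ) (hJmeas : Measurable J) (hJbdd : ∃ C : ℝ, ∀ ω, |J ω| ≤ C)
    (η : ℝ)
    (n N : ℕ) (hnN : n ≤ N) :
    (∫ x : Fin N → Ω,
        ((N.choose n : ℝ))⁻¹ *
          ∑ S ∈ Finset.powersetCard n (Finset.univ : Finset (Fin N)),
            topAvgOfSubset Y J ⌊η * n⌋₊ S x
        ∂(Measure.pi fun _ : Fin N => μ))
      = ∫ x : Fin n → Ω, topAvgOfSubset Y J ⌊η * n⌋₊ Finset.univ x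
          ∂(Measure.pi fun _ : Fin n => μ) := by
  obtain ⟨C, hC⟩ := hJbdd
  have hchoose : (N.choose n : ℝ) ≠ 0 := by exact_mod_cast (Nat.choose_pos hnN).ne'
  rw [integral_const_mul,
    integral_finsetSum _ fun S _ => integrable_topAvgOfSubset _ hY hJmeas hC S,
    Finset.sum_congr rfl fun S hS =>
      integral_topAvgOfSubset_of_card_eq μ hY hJmeas (mem_powersetCard.1 hS).2,
    sum_const, card_powersetCard, card_univ, Fintype.card_fin, nsmul_eq_mul,
    inv_mul_cancel_left₀ hchoose]

/-- Let `μ` be a probability measure on `Ω`, `Y : Ω → ℝ` measurable with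
atomless law, and `J : Ω → ℝ` bounded and measurable. Fix `η ∈ (0,1)` and `n ≤ N` with
`⌊ηn⌋ ≥ 1`, and let `a_1, …, a_N` be i.i.d. samples from `μ` (modeled by the product measure on
`Fin N → Ω`). For `S ⊆ {1,…,N}` with `|S| = n`, let `T(S)` be `1/⌊ηn⌋` times the sum of `J` over
the `⌊ηn⌋` elements of `{a_i : i ∈ S}` with the largest `Y`-values. Then
`E[(1/C(N,n)) · ∑_{|S| = n} T(S)]` equals the expectation of the corresponding average computed
from `n` fresh i.i.d. samples, i.e. the RETA resampling estimator is unbiased. -/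
theorem reta_subset_estimator_unbiased
    {Ω : Type*} [MeasurableSpace Ω] (μ : Measure Ω) [IsProbabilityMeasure μ]
    (Y : Ω → ℝ) (hY : Measurable Y)
    (hatomless : ∀ c : ℝ, μ {ω | Y ω = c} = 0)
    (J : Ω → ℝ) (hJmeas : Measurable J) (hJbdd : ∃ C : ℝ, ∀ ω, |J ω| ≤ C)
    (η : ℝ) (hη : η ∈ Set.Ioo (0 : ℝ) 1)
    (n N : ℕ) (hnN : n ≤ N) (hk : 1 ≤ ⌊η * n⌋₊) :
    (∫ x : Fin N → Ω,
        ((N.choose n : ℝ))⁻¹ *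
          ∑ S ∈ Finset.powersetCard n (Finset.univ : Finset (Fin N)),
            topAvgOfSubset Y J ⌊η * n⌋₊ S x
        ∂(Measure.pi fun _ : Fin N => μ))
      = ∫ x : Fin n → Ω, topAvgOfSubset Y J ⌊η * n⌋₊ Finset.univ x
          ∂(Measure.pi fun _ : Fin n => μ) :=
  reta_subset_estimator_unbiased_general μ Y hY J hJmeas hJbdd η n N hnN
end
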